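/- Fix integers n ≥ 1, ℓ ≥ 2, N ≥ 2(n+ℓ+2) and m ∈ (0,1). Then the interpolating constraint c^m satisfies the gradient condition: there exists a function H : Ω_N → ℝ such that for every configuration η ∈ Ω_N, c^m(η)·(η(1) − η(0)) = H(τη) − H(η), where (τη)(x) = η(x+1). -/

import Mathlib

/-- Generalized binomial coefficient `binom(m,k) = m(m-1)⋯(m-(k-1))/k!`. -/
noncomputable def genBinom (m : ℝ) (k : ℕ) : ℝ :=
  (∏ i ∈ Finset.range k, (m - i)) / (Nat.factorial k)

/-- Occupation value of a site, regarded as a real number. -/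
def occ (b : Bool) : ℝ := if b then 1 else 0

/-- Projection to the discrete torus `T_N = ZMod N` of the integer interval `⟦a,b⟧`. -/
noncomputable def torusBox (N : ℕ) (a b : ℤ) : Finset (ZMod N) :=
  (Finset.Icc a b).image (fun i : ℤ => (i : ZMod N))

/-- The set of sites `⟦-j, -j+L+1⟧ \ {0,1}` in the torus (`L` sites). -/
noncomputable def sites (N : ℕ) (j L : ℕ) : Finset (ZMod N) :=
  torusBox N (-(j : ℤ)) (-(j : ℤ) + L + 1) \ {0, 1}

/-- `𝔫_j^L(η)`: the number of particles of `η` in `⟦-j, -j+L+1⟧ \ {0,1}`. -/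
noncomputable def nnum (N : ℕ) (j L : ℕ) (η : ZMod N → Bool) : ℕ :=
  ((sites N j L).filter (fun i => η i = true)).card

/-- Bernoulli product weight `ν_α({η})`. -/
noncomputable def bwt (N : ℕ) [NeZero N] (α : ℝ) (η : ZMod N → Bool) : ℝ :=
  ∏ x : ZMod N, (if η x then α else 1 - α)

/-- PMM(n) constraint component `p_n^j(η) = ∏_{i ∈ ⟦-j,-j+n+1⟧∖{0,1}} η(i)`. -/
noncomputable def pj (N n j : ℕ) (η : ZMod N → Bool) : ℝ :=
  ∏ i ∈ sites N j n, occ (η i)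

/-- Auxiliary constraint component
`p_{n,k}^j(η) = (binom(𝔫_j^{n+k}(η),n)/binom(n+k,n))·𝟙{𝔫_j^{n+k}(η) ≥ n+1}`. -/
noncomputable def pkj (N n k j : ℕ) (η : ZMod N → Bool) : ℝ :=
  ((nnum N j (n + k) η).choose n : ℝ) / ((n + k).choose n : ℝ) *
    (if n + 1 ≤ nnum N j (n + k) η then 1 else 0)

/-- Component `c^{m,j}` of the interpolating constraint. -/
noncomputable def cmj (N n ℓ : ℕ) (m : ℝ) (j : ℕ) (η : ZMod N → Bool) : ℝ :=
  pj N n j η + ∑ k ∈ Finset.Icc 1 ℓ, (-1 : ℝ) ^ k * genBinom m k * (pj N n j η - pkj N n k j η)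

/-- The normalized PMM(n) constraint `p_n = (1/(n+1))·Σ_{j=0}^{n} p_n^j`. -/
noncomputable def pn (N n : ℕ) (η : ZMod N → Bool) : ℝ :=
  (1 / ((n : ℝ) + 1)) * ∑ j ∈ Finset.range (n + 1), pj N n j η

/-- The normalized auxiliary constraint `p_{n,k} = (1/(n+k+1))·Σ_{j=0}^{n+k} p_{n,k}^j`. -/
noncomputable def pnk (N n k : ℕ) (η : ZMod N → Bool) : ℝ :=
  (1 / ((n : ℝ) + k + 1)) * ∑ j ∈ Finset.range (n + k + 1), pkj N n k j η

/-- The interpolating constraint `c^m`. -/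
noncomputable def cm (N n ℓ : ℕ) (m : ℝ) (η : ZMod N → Bool) : ℝ :=
  pn N n η + ∑ k ∈ Finset.Icc 1 ℓ, (-1 : ℝ) ^ k * genBinom m k * (pn N n η - pnk N n k η)


/-- The shift `(τη)(x) = η(x+1)`. -/
def shift (N : ℕ) (η : ZMod N → Bool) : ZMod N → Bool := fun x => η (x + 1)

/-!
If `τ` is a map of period `N` and the sums of `f` over the `τ`-orbits vanish, then
`f = H ∘ τ - H` with `H = (1/N) ∑_{t<N} t • f ∘ τ^t`. Constraints satisfying the gradient
condition form a linear space, and `c^m` is a linear combination of `p_n` and the `p_{n,k}`,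
each of the form `∑_j q(𝔫_j^L)` for some `q : ℕ → ℝ`. For such a window constraint, whenever
`η(t) ≠ η(t+1)` the count `𝔫_j^L(τ^t η)` is one less than the number `W_{L+2}(t-j)` of particles
in the `L+2` sites starting at `t-j`. Summing over `j` and `t`, the orbit sum becomes
`∑_x q(W_{L+2}(x) - 1)(η(x+L+1) - η(x)) = ∑_x (Ψ(W_{L+1}(x+1)) - Ψ(W_{L+1}(x)))` with
`Ψ(r) = ∑_{s<r} q(s)`, which telescopes around the torus.
-/

open Finset

theorem exists_eq_apply_sub_of_sum_iterate_eq_zero {X K : Type*} [Field K] [CharZero K]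
    (τ : X → X) {N : ℕ} (hN : N ≠ 0) (hτ : ∀ x, τ^[N] x = x) (f : X → K)
    (hf : ∀ x, ∑ t ∈ range N, f (τ^[t] x) = 0) :
    ∃ H : X → K, ∀ x, f x = H (τ x) - H x := by
  set S : X → K := fun x => ∑ t ∈ range N, (t : K) * f (τ^[t] x)
  have hS : ∀ x, S (τ x) = S x + N * f x := fun x => calc
    S (τ x) = S (τ x) + ∑ t ∈ range N, f (τ^[t] (τ x)) := by rw [hf, add_zero]
    _ = ∑ t ∈ range N, ((t + 1 : ℕ) : K) * f (τ^[t + 1] x) := by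
      simp only [S, ← sum_add_distrib, Function.iterate_succ_apply]
      refine sum_congr rfl fun t _ => ?_
      push_cast; ring
    _ = ∑ t ∈ range (N + 1), (t : K) * f (τ^[t] x) := by simp [sum_range_succ']
    _ = S x + N * f x := by rw [sum_range_succ, hτ]
  refine ⟨fun x => S x / N, fun x => ?_⟩
  rw [← sub_div, hS, add_sub_cancel_left, mul_div_cancel_left₀ _ (Nat.cast_ne_zero.mpr hN)]

def gradientConstraints (N : ℕ) : Submodule ℝ ((ZMod N → Bool) → ℝ) where
  carrier := {c | ∃ H : (ZMod N → Bool) → ℝ, ∀ η,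
    c η * (occ (η 1) - occ (η 0)) = H (shift N η) - H η}
  zero_mem' := ⟨0, by simp⟩
  add_mem' := by
    rintro c c' ⟨H, hH⟩ ⟨H', hH'⟩
    exact ⟨H + H', fun η => by simp only [Pi.add_apply, add_mul, hH, hH']; ring⟩
  smul_mem' := by
    rintro r c ⟨H, hH⟩
    exact ⟨r • H, fun η => by simp only [Pi.smul_apply, smul_eq_mul, mul_assoc, hH]; ring⟩

theorem shift_iterate (N t : ℕ) (η : ZMod N → Bool) : (shift N)^[t] η = fun x => η (x + t) := by
  induction t with
  | zero => simp
  | succ t ih =>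
    rw [Function.iterate_succ_apply', ih]
    funext x
    simp [shift, add_assoc, add_comm (1 : ZMod N)]

theorem ZMod.sum_range_natCast {M : Type*} [AddCommMonoid M] (N : ℕ) [NeZero N]
    (g : ZMod N → M) : ∑ t ∈ range N, g t = ∑ x, g x :=
  sum_nbij' (↑) ZMod.val (by simp) (by simp [ZMod.val_lt])
    (fun t ht => ZMod.val_cast_of_lt (mem_range.mp ht)) (by simp) (by simp)

theorem mem_gradientConstraints_of_sum_eq_zero {N : ℕ} [NeZero N] {c : (ZMod N → Bool) → ℝ}
    (hc : ∀ η : ZMod N → Bool,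
      ∑ t : ZMod N, c (fun x => η (x + t)) * (occ (η (t + 1)) - occ (η t)) = 0) :
    c ∈ gradientConstraints N := by
  refine exists_eq_apply_sub_of_sum_iterate_eq_zero (shift N) (NeZero.ne N) (fun η => ?_) _
    (fun η => ?_)
  · simp [shift_iterate]
  · rw [← hc η, ← ZMod.sum_range_natCast]
    simp [shift_iterate, add_comm (1 : ZMod N)]

def windowCount (N L : ℕ) (η : ZMod N → Bool) (x : ZMod N) : ℕ :=
  ∑ i ∈ range L, (η (x + i)).toNat

theorem windowCount_succ (N L : ℕ) (η : ZMod N → Bool) (x : ZMod N) :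
    windowCount N (L + 1) η x = windowCount N L η x + (η (x + L)).toNat :=
  sum_range_succ _ _

theorem windowCount_succ' (N L : ℕ) (η : ZMod N → Bool) (x : ZMod N) :
    windowCount N (L + 1) η x = (η x).toNat + windowCount N L η (x + 1) := by
  simp only [windowCount, sum_range_succ', Nat.cast_add, Nat.cast_one, Nat.cast_zero, add_zero,
    add_comm _ (η x).toNat, add_assoc, add_comm (1 : ZMod N)]

theorem torusBox_eq_image (N j L : ℕ) :
    torusBox N (-j) (-j + L + 1) = (range (L + 2)).image fun i : ℕ => -(j : ZMod N) + i := by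
  have hIcc : Icc (-(j : ℤ)) (-j + L + 1) = (range (L + 2)).image fun i : ℕ => -(j : ℤ) + i := by
    ext a
    simp only [mem_Icc, mem_image, mem_range]
    exact ⟨fun h => ⟨(a + j).toNat, by omega, by omega⟩, by rintro ⟨i, hi, rfl⟩; omega⟩
  rw [torusBox, hIcc, image_image]
  exact image_congr fun i _ => by simp

theorem nnum_add_toNat_add_toNat {N j L : ℕ} (hL : L + 2 ≤ N) (hj : j ≤ L) (η : ZMod N → Bool) :
    nnum N j L η + (η 0).toNat + (η 1).toNat = windowCount N (L + 2) η (-j) := by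
  have : Fact (1 < N) := ⟨by omega⟩
  have hinj : Set.InjOn (fun i : ℕ => -(j : ZMod N) + i) (range (L + 2)) := by
    intro a ha b hb hab
    have := congrArg ZMod.val (add_left_cancel hab)
    rwa [ZMod.val_cast_of_lt (by simp at ha; omega),
      ZMod.val_cast_of_lt (by simp at hb; omega)] at this
  have hpair : {0, 1} ⊆ (range (L + 2)).image fun i : ℕ => -(j : ZMod N) + i := by
    intro x hx
    rcases mem_insert.mp hx with rfl | hx
    · exact mem_image.mpr ⟨j, by simp; omega, by simp⟩
    · exact mem_image.mpr ⟨j + 1, by simp; omega, by simp [mem_singleton.mp hx]⟩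
  rw [windowCount, ← sum_image (f := fun x => (η x).toNat) hinj, ← sum_sdiff hpair,
    sum_pair zero_ne_one, nnum, sites, torusBox_eq_image, card_filter, add_assoc]
  congr 1
  exact sum_congr rfl fun x _ => by cases η x <;> rfl

theorem card_sites {N j L : ℕ} (hL : L + 2 ≤ N) (hj : j ≤ L) : (sites N j L).card = L := by
  have h := nnum_add_toNat_add_toNat hL hj fun _ => true
  simpa [nnum, windowCount] using h

theorem pj_eq_ite {N n j : ℕ} (hn : n + 2 ≤ N) (hj : j ≤ n) (η : ZMod N → Bool) :
    pj N n j η = if nnum N j n η = n then 1 else 0 := by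
  have hall : nnum N j n η = n ↔ ∀ i ∈ sites N j n, η i = true := by
    rw [nnum, ← card_filter_eq_iff, card_sites hn hj]
  rw [pj, if_congr hall rfl rfl]
  exact prod_boole

theorem apply_mul_occ_sub_occ_eq {a b : Bool} {k c : ℕ} (q : ℕ → ℝ)
    (h : k + a.toNat + b.toNat = c) : q k * (occ b - occ a) = q (c - 1) * (occ b - occ a) := by
  subst h
  cases a <;> cases b <;> simp [occ]

theorem apply_mul_occ_sub_occ_eq_sum_sub_sum (q : ℕ → ℝ) (a b : Bool) (c : ℕ) :
    q (a.toNat + c + b.toNat - 1) * (occ b - occ a) =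
      ∑ s ∈ range (c + b.toNat), q s - ∑ s ∈ range (a.toNat + c), q s := by
  cases a <;> cases b <;> simp [occ, add_comm 1 c, sum_range_succ]

theorem sum_window_mul_occ_sub_occ_eq_zero {N L : ℕ} [NeZero N] (hL : L + 2 ≤ N) (q : ℕ → ℝ)
    (η : ZMod N → Bool) :
    ∑ t : ZMod N, (∑ j ∈ range (L + 1), q (nnum N j L fun x => η (x + t))) *
      (occ (η (t + 1)) - occ (η t)) = 0 := by
  set d : ZMod N → ℝ := fun t => occ (η (t + 1)) - occ (η t)
  set g : ZMod N → ℝ := fun x => q (windowCount N (L + 2) η x - 1)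
  set Ψ : ℕ → ℝ := fun r => ∑ s ∈ range r, q s
  have hcount : ∀ t, ∀ j ∈ range (L + 1),
      q (nnum N j L fun x => η (x + t)) * d t = g (t - j) * d t := by
    intro t j hj
    refine apply_mul_occ_sub_occ_eq q ?_
    have := nnum_add_toNat_add_toNat hL (mem_range_succ_iff.mp hj) fun x => η (x + t)
    simpa [windowCount, add_comm, add_left_comm, sub_eq_add_neg] using this
  have htele : ∀ x, ∑ j ∈ range (L + 1), d (x + j) = occ (η (x + 1 + L)) - occ (η x) := by
    intro x
    have := sum_range_sub (fun i : ℕ => occ (η (x + i))) (L + 1)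
    simpa [d, add_assoc, add_comm (1 : ZMod N)] using this
  have hstep : ∀ x, g x * (occ (η (x + 1 + L)) - occ (η x)) =
      Ψ (windowCount N (L + 1) η (x + 1)) - Ψ (windowCount N (L + 1) η x) := by
    intro x
    have hsplit : windowCount N (L + 2) η x = (η x).toNat + windowCount N (L + 1) η (x + 1) :=
      windowCount_succ' N (L + 1) η x
    simp only [g]
    rw [hsplit, windowCount_succ N L η (x + 1), windowCount_succ' N L η x, ← add_assoc]
    exact apply_mul_occ_sub_occ_eq_sum_sub_sum q _ _ _
  calc ∑ t, (∑ j ∈ range (L + 1), q (nnum N j L fun x => η (x + t))) * d t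
      = ∑ j ∈ range (L + 1), ∑ t, g (t - j) * d t := by
        simp_rw [sum_mul]
        rw [sum_comm]
        exact sum_congr rfl fun j hj => sum_congr rfl fun t _ => hcount t j hj
    _ = ∑ j ∈ range (L + 1), ∑ x, g x * d (x + j) := sum_congr rfl fun j _ => by
        rw [← Equiv.sum_comp (Equiv.addRight (j : ZMod N))]
        simp
    _ = ∑ x, g x * ∑ j ∈ range (L + 1), d (x + j) := by
        simp_rw [mul_sum]
        exact sum_comm
    _ = ∑ x, (Ψ (windowCount N (L + 1) η (x + 1)) - Ψ (windowCount N (L + 1) η x)) := by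
        simp_rw [htele, hstep]
    _ = 0 := by
        rw [sum_sub_distrib, sub_eq_zero]
        exact Equiv.sum_comp (Equiv.addRight 1) fun x => Ψ (windowCount N (L + 1) η x)

theorem window_mem_gradientConstraints {N L : ℕ} (hL : L + 2 ≤ N) (q : ℕ → ℝ) :
    (fun η => ∑ j ∈ range (L + 1), q (nnum N j L η)) ∈ gradientConstraints N :=
  have : NeZero N := ⟨by omega⟩
  mem_gradientConstraints_of_sum_eq_zero (sum_window_mul_occ_sub_occ_eq_zero hL q)

theorem pn_mem_gradientConstraints {N n : ℕ} (hn : n + 2 ≤ N) :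
    pn N n ∈ gradientConstraints N := by
  convert window_mem_gradientConstraints hn fun r => 1 / (n + 1 : ℝ) * if r = n then 1 else 0
  rw [pn, mul_sum]
  exact sum_congr rfl fun j hj => by rw [pj_eq_ite hn (mem_range_succ_iff.mp hj)]

theorem pnk_mem_gradientConstraints {N n k : ℕ} (hnk : n + k + 2 ≤ N) :
    pnk N n k ∈ gradientConstraints N := by
  convert window_mem_gradientConstraints hnk fun r => 1 / (n + k + 1 : ℝ) *
    ((r.choose n : ℝ) / (n + k).choose n * if n + 1 ≤ r then 1 else 0)
  rw [pnk, mul_sum]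
  rfl

theorem cm_eq_add_sum_smul (N n ℓ : ℕ) (m : ℝ) :
    cm N n ℓ m = pn N n + ∑ k ∈ Icc 1 ℓ, ((-1) ^ k * genBinom m k) • (pn N n - pnk N n k) := by
  funext η
  simp [cm, Finset.sum_apply, mul_assoc]

theorem cm_mem_gradientConstraints {N n ℓ : ℕ} (m : ℝ) (h : n + ℓ + 2 ≤ N) :
    cm N n ℓ m ∈ gradientConstraints N := by
  have hpn := pn_mem_gradientConstraints (N := N) (n := n) (by omega)
  rw [cm_eq_add_sum_smul]
  refine add_mem hpn (sum_mem fun k hk => Submodule.smul_mem _ _ (sub_mem hpn ?_))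
  exact pnk_mem_gradientConstraints (by simp at hk; omega)

theorem cm_gradient_condition_general (N n ℓ : ℕ) (hN : 2 * (n + ℓ + 2) ≤ N) (m : ℝ) :
    ∃ H : (ZMod N → Bool) → ℝ, ∀ η : ZMod N → Bool,
      cm N n ℓ m η * (occ (η 1) - occ (η 0)) = H (shift N η) - H η :=
  cm_mem_gradientConstraints m (by omega)

theorem cm_gradient_condition (N n ℓ : ℕ) [NeZero N]
    (hn : 1 ≤ n) (hℓ : 2 ≤ ℓ) (hN : 2 * (n + ℓ + 2) ≤ N)
    (m : ℝ) (hm : m ∈ Set.Ioo (0 : ℝ) 1) :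
    ∃ H : (ZMod N → Bool) → ℝ, ∀ η : ZMod N → Bool,
      cm N n ℓ m η * (occ (η 1) - occ (η 0)) = H (shift N η) - H η :=
  cm_gradient_condition_general N n ℓ hN m
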